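/- If $w$ is a recurrent infinite word, then a word $s$ is a factor of a conjugate of a factor of $w$ if and only if $s$ is a product of two factors of $w$. Consequently $\pexp_2(w) = \cexp(w)$. -/

import Mathlib

open scoped ENNReal

/-- `u` occurs at position `i` of the infinite word `w`. -/
def FactorAt {α : Type*} (u : List α) (w : ℕ → α) (i : ℕ) : Prop :=
  u = (List.range u.length).map (fun k => w (i + k))

/-- `u` occurs as a factor of the infinite word `w` (at some position `i`). -/
def FactorOf {α : Type*} (u : List α) (w : ℕ → α) : Prop :=
  ∃ i : ℕ, FactorAt u w i

/-- `p` is a period of the finite word `v`. -/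
def HasPeriod {α : Type*} (v : List α) (p : ℕ) : Prop :=
  0 < p ∧ p ≤ v.length ∧ ∀ i : ℕ, i + p < v.length → v[i + p]? = v[i]?

/-- `s` is a factor of a conjugate of a factor of `w`. -/
def CircFactor {α : Type*} (s : List α) (w : ℕ → α) : Prop :=
  ∃ f u v : List α, FactorOf f w ∧ f = u ++ v ∧ s <:+: (v ++ u)

/-!
A factor `u ++ v` of `w` has the conjugate `v ++ u`, so every factor of a conjugate splits as
a factor of `v` followed by a factor of `u`. Conversely, given factors `x` and `y`, recurrence
lets `x` occur again after an occurrence of `y`; the stretch `y ++ g ++ x` of `w` between them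
is a factor whose conjugate `x ++ (y ++ g)` begins with `x ++ y`. The two exponents are then
suprema of the same set.
-/

theorem List.IsInfix.exists_eq_append_of_infix_append {α : Type*} {s a b : List α}
    (h : s <:+: a ++ b) : ∃ x y : List α, s = x ++ y ∧ x <:+: a ∧ y <:+: b := by
  rcases List.infix_append_iff.mp h with hs | hs | ⟨x, y, rfl, hx, hy⟩
  · exact ⟨s, [], by simp, hs, List.nil_infix⟩
  · exact ⟨[], s, rfl, List.nil_infix, hs⟩
  · exact ⟨x, y, rfl, hx.isInfix, hy.isInfix⟩

section InfiniteWord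

variable {α : Type*} (w : ℕ → α)

def window (i n : ℕ) : List α := (List.range n).map (fun k => w (i + k))

@[simp]
lemma length_window (i n : ℕ) : (window w i n).length = n := by simp [window]

lemma factorAt_iff_eq_window {u : List α} {i : ℕ} : FactorAt u w i ↔ u = window w i u.length :=
  Iff.rfl

lemma factorAt_window (i n : ℕ) : FactorAt (window w i n) w i := by
  rw [factorAt_iff_eq_window, length_window]

lemma window_add (i m n : ℕ) : window w i (m + n) = window w i m ++ window w (i + m) n := by
  simp [window, List.range_add, Function.comp_def, Nat.add_assoc]

variable {w}

lemma factorAt_append_iff {u v : List α} {i : ℕ} :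
    FactorAt (u ++ v) w i ↔ FactorAt u w i ∧ FactorAt v w (i + u.length) := by
  rw [factorAt_iff_eq_window, factorAt_iff_eq_window, factorAt_iff_eq_window,
    List.length_append, window_add]
  exact ⟨fun h => List.append_inj h (length_window w _ _).symm, fun ⟨hu, hv⟩ => hu ▸ hv ▸ rfl⟩

lemma FactorOf.of_infix {s f : List α} (hf : FactorOf f w) (h : s <:+: f) : FactorOf s w := by
  obtain ⟨l, r, rfl⟩ := h
  obtain ⟨i, hi⟩ := hf
  rw [factorAt_append_iff, factorAt_append_iff] at hi
  exact ⟨i + l.length, hi.1.2⟩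

lemma CircFactor.exists_eq_append {s : List α} (hs : CircFactor s w) :
    ∃ x y : List α, FactorOf x w ∧ FactorOf y w ∧ s = x ++ y := by
  obtain ⟨_, u, v, ⟨i, hi⟩, rfl, hs⟩ := hs
  rw [factorAt_append_iff] at hi
  obtain ⟨x, y, rfl, hx, hy⟩ := hs.exists_eq_append_of_infix_append
  exact ⟨x, y, FactorOf.of_infix ⟨_, hi.2⟩ hx, FactorOf.of_infix ⟨_, hi.1⟩ hy, rfl⟩

lemma circFactor_append_of_factorAt {x y : List α} {i j : ℕ} (hx : FactorAt x w i)
    (hy : FactorAt y w j) (hji : j + y.length ≤ i) : CircFactor (x ++ y) w := by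
  set g := window w (j + y.length) (i - (j + y.length))
  refine ⟨y ++ g ++ x, y ++ g, x, ⟨j, ?_⟩, rfl, ⟨[], g, by simp⟩⟩
  rw [factorAt_append_iff, factorAt_append_iff, List.length_append, length_window,
    ← Nat.add_assoc, Nat.add_sub_cancel' hji]
  exact ⟨⟨hy, factorAt_window w _ _⟩, hx⟩

lemma circFactor_iff_of_recurrent
    (hrec : ∀ u : List α, FactorOf u w → ∀ N : ℕ, ∃ i ≥ N, FactorAt u w i) (s : List α) :
    CircFactor s w ↔ ∃ x y : List α, FactorOf x w ∧ FactorOf y w ∧ s = x ++ y := by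
  refine ⟨CircFactor.exists_eq_append, ?_⟩
  rintro ⟨x, y, hx, ⟨j, hy⟩, rfl⟩
  obtain ⟨i, hji, hi⟩ := hrec x hx (j + y.length)
  exact circFactor_append_of_factorAt hi hy hji

end InfiniteWord

/-- for a recurrent infinite word `w`, the circular factors of `w` are
exactly the products of two factors of `w`; consequently `pexp₂(w) = cexp(w)`. -/
theorem recurrent_circular_eq_two_products {α : Type*} (w : ℕ → α)
    (hrec : ∀ u : List α, FactorOf u w → ∀ N : ℕ, ∃ i ≥ N, FactorAt u w i) :
    (∀ s : List α, CircFactor s w ↔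
      ∃ x y : List α, FactorOf x w ∧ FactorOf y w ∧ s = x ++ y) ∧
    sSup {e : ℝ≥0∞ | ∃ (s : List α) (p : ℕ), CircFactor s w ∧ HasPeriod s p ∧
        e = (s.length : ℝ≥0∞) / p} =
    sSup {e : ℝ≥0∞ | ∃ (x y : List α) (p : ℕ), FactorOf x w ∧ FactorOf y w ∧
        HasPeriod (x ++ y) p ∧ e = ((x ++ y).length : ℝ≥0∞) / p} := by
  have hcirc := circFactor_iff_of_recurrent hrec
  refine ⟨hcirc, congrArg sSup (Set.ext fun e => ⟨?_, ?_⟩)⟩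
  · rintro ⟨s, p, hs, hper, rfl⟩
    obtain ⟨x, y, hx, hy, rfl⟩ := (hcirc s).1 hs
    exact ⟨x, y, p, hx, hy, hper, rfl⟩
  · rintro ⟨x, y, p, hx, hy, hper, rfl⟩
    exact ⟨x ++ y, p, (hcirc _).2 ⟨x, y, hx, hy, rfl⟩, hper, rfl⟩
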